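/- Let (ρ_a)_{a∈A} be a measurable family of risk measures each having the Lebesgue property, and suppose the integral infimal convolution φ = □_{a∈A} ρ_a μ(da) is finite-valued. Then φ is continuous from above: if (X^n) ⊆ L∞(P) is a decreasing sequence converging a.s. to X ∈ L∞(P), then inf_n φ(X^n) = φ(X). -/

import Mathlib

/-!
Since `X ≤ X^n`, monotonicity of `φ` gives `φ(X) ≤ inf_n φ(X^n)`. Conversely, an `X`-feasible
allocation `(X_a)` becomes `X^n`-feasible after adding `(X^n - X) / μ(A)` to every component.
These perturbations are bounded by `‖X^0 - X‖ / μ(A)` and tend to `0` a.s., and a monotone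
cash-additive risk measure is `1`-Lipschitz, so the Lebesgue property of each `ρ_a` and dominated
convergence bring the total risk back to `∫ ρ_a(X_a) dμ`.
-/

open MeasureTheory

/-- An allocation `(Xa a)_{a ∈ A} ⊆ L∞(P)` is `X`-feasible if it is Gelfand integrable and
its Gelfand integral is `X`. -/
def Feasible {A Ω : Type*} [MeasurableSpace A] [MeasurableSpace Ω] (μ : Measure A)
    (P : Measure Ω) [IsProbabilityMeasure P] (X : Lp ℝ ⊤ P) (Xa : A → Lp ℝ ⊤ P) : Prop :=
  (∀ Y : Lp ℝ 1 P, Integrable (fun a => ∫ ω, Xa a ω * Y ω ∂P) μ) ∧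
  (∀ Y : Lp ℝ 1 P, (∫ a, (∫ ω, Xa a ω * Y ω ∂P) ∂μ) = ∫ ω, X ω * Y ω ∂P)

/-- The value set of the integral infimal convolution: attainable total risks of
`X`-feasible allocations. -/
def ValueSet {A Ω : Type*} [MeasurableSpace A] [MeasurableSpace Ω] (μ : Measure A)
    (P : Measure Ω) [IsProbabilityMeasure P] (ρ : A → Lp ℝ ⊤ P → ℝ)
    (X : Lp ℝ ⊤ P) : Set ℝ :=
  {r : ℝ | ∃ Xa : A → Lp ℝ ⊤ P, Feasible μ P X Xa ∧
    Integrable (fun a => ρ a (Xa a)) μ ∧ r = ∫ a, ρ a (Xa a) ∂μ}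

open Filter Topology

namespace MeasureTheory.Lp

variable {α E : Type*} [MeasurableSpace α] {μ : Measure α} {p : ENNReal} [NormedAddCommGroup E]

theorem ae_norm_le_norm (f : Lp E ⊤ μ) : ∀ᵐ x ∂μ, ‖f x‖ ≤ ‖f‖ := by
  have hf : eLpNormEssSup f μ ≠ ⊤ := by simpa [eLpNorm_exponent_top] using Lp.eLpNorm_ne_top f
  filter_upwards [ae_le_eLpNormEssSup (f := f) (μ := μ)] with x hx
  simpa [Lp.norm_def, eLpNorm_exponent_top] using ENNReal.toReal_mono hf hx

theorem le_const_norm [IsFiniteMeasure μ] (f : Lp ℝ ⊤ μ) : f ≤ Lp.const ⊤ μ ‖f‖ := by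
  rw [← Lp.coeFn_le]
  filter_upwards [ae_norm_le_norm f, Lp.coeFn_const (p := ⊤) (μ := μ) ‖f‖] with x hx hc
  rw [hc]
  exact (le_abs_self _).trans hx

theorem integrable_coeFn_mul (f : Lp ℝ ⊤ μ) (Y : Lp ℝ 1 μ) :
    Integrable (fun x => f x * Y x) μ :=
  (L1.integrable_coeFn Y).mul_of_top_right (Lp.memLp f)

theorem integral_add_smul_mul (f g : Lp ℝ ⊤ μ) (c : ℝ) (Y : Lp ℝ 1 μ) :
    ∫ x, (f + c • g) x * Y x ∂μ = (∫ x, f x * Y x ∂μ) + c * ∫ x, g x * Y x ∂μ := by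
  rw [← integral_const_mul, ← integral_add (integrable_coeFn_mul f Y)
    ((integrable_coeFn_mul g Y).const_mul c)]
  refine integral_congr_ae ?_
  filter_upwards [Lp.coeFn_add f (c • g), Lp.coeFn_smul c g] with x hadd hsmul
  simp only [hadd, hsmul, Pi.add_apply, Pi.smul_apply, smul_eq_mul]
  ring

theorem norm_le_norm_of_nonneg_of_le {f g : Lp ℝ p μ} (hf : 0 ≤ f) (hfg : f ≤ g) :
    ‖f‖ ≤ ‖g‖ := by
  refine Lp.norm_le_norm_of_ae_le ?_
  filter_upwards [(Lp.coeFn_le 0 f).2 hf, (Lp.coeFn_le f g).2 hfg, Lp.coeFn_zero ℝ p μ]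
    with x h0f hfg h0
  rw [h0] at h0f
  simp only [Pi.zero_apply] at h0f
  rw [Real.norm_of_nonneg h0f, Real.norm_of_nonneg (h0f.trans hfg)]
  exact hfg

theorem smul_nonpos {c : ℝ} (hc : 0 ≤ c) {f : Lp ℝ p μ} (hf : f ≤ 0) : c • f ≤ 0 := by
  rw [← Lp.coeFn_le]
  filter_upwards [(Lp.coeFn_le f 0).2 hf, Lp.coeFn_smul c f, Lp.coeFn_zero ℝ p μ]
    with x hx hsmul h0
  rw [h0] at hx ⊢
  rw [hsmul, Pi.smul_apply, smul_eq_mul]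
  exact mul_nonpos_of_nonneg_of_nonpos hc hx

theorem ae_tendsto_add_smul_sub {f : ℕ → Lp ℝ p μ} {g : Lp ℝ p μ}
    (h : ∀ᵐ x ∂μ, Tendsto (fun n => f n x) atTop (𝓝 (g x))) (h₀ : Lp ℝ p μ) (c : ℝ) :
    ∀ᵐ x ∂μ, Tendsto (fun n => (h₀ + c • (f n - g)) x) atTop (𝓝 (h₀ x)) := by
  have hcoe : ∀ᵐ x ∂μ, ∀ n, (h₀ + c • (f n - g)) x = h₀ x + c * (f n x - g x) := by
    refine ae_all_iff.2 fun n => ?_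
    filter_upwards [Lp.coeFn_add h₀ (c • (f n - g)), Lp.coeFn_smul c (f n - g),
      Lp.coeFn_sub (f n) g] with x hadd hsmul hsub
    simp only [hadd, hsmul, hsub, Pi.add_apply, Pi.smul_apply, Pi.sub_apply, smul_eq_mul]
  filter_upwards [h, hcoe] with x hx hxcoe
  simp only [hxcoe]
  simpa using tendsto_const_nhds.add (tendsto_const_nhds.mul (hx.sub_const (g x)))

theorem tendsto_measure_le_abs_sub_of_ae [IsFiniteMeasure μ] {f : ℕ → Lp ℝ p μ} {g : Lp ℝ p μ}
    (h : ∀ᵐ x ∂μ, Tendsto (fun n => f n x) atTop (𝓝 (g x))) {ε : ℝ} (hε : 0 < ε) :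
    Tendsto (fun n => μ {x | ε ≤ |f n x - g x|}) atTop (𝓝 0) := by
  simpa only [Real.dist_eq] using tendstoInMeasure_iff_dist.1
    (tendstoInMeasure_of_tendsto_ae (fun n => Lp.aestronglyMeasurable (f n)) h) ε hε

end MeasureTheory.Lp

theorem LipschitzWith.abs_sub_add_le {E : Type*} [SeminormedAddCommGroup E] {f : E → ℝ}
    (hf : LipschitzWith 1 f) (x w : E) : |f (x + w) - f x| ≤ ‖w‖ := by
  simpa [Real.dist_eq, dist_eq_norm] using hf.dist_le_mul (x + w) x

theorem Antitone.le_of_tendsto_ae {α : Type*} [MeasurableSpace α] {μ : Measure α} {p : ENNReal}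
    {f : ℕ → Lp ℝ p μ} {g : Lp ℝ p μ} (hf : Antitone f)
    (hlim : ∀ᵐ x ∂μ, Tendsto (fun n => f n x) atTop (𝓝 (g x))) (n : ℕ) : g ≤ f n := by
  rw [← Lp.coeFn_le]
  have htail : ∀ᵐ x ∂μ, ∀ m, f (m + n) x ≤ f n x :=
    ae_all_iff.2 fun m => (Lp.coeFn_le _ _).2 (hf (Nat.le_add_left n m))
  filter_upwards [htail, hlim] with x hx hxlim
  exact _root_.le_of_tendsto ((tendsto_add_atTop_iff_nat n).2 hxlim) (Eventually.of_forall hx)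

section RiskMeasure

variable {Ω : Type*} [MeasurableSpace Ω] {P : Measure Ω} [IsFiniteMeasure P]

theorem lipschitzWith_one_of_monotone_of_cash {ρ : Lp ℝ ⊤ P → ℝ} (hmono : Monotone ρ)
    (hcash : ∀ (X : Lp ℝ ⊤ P) (c : ℝ), ρ (X + Lp.const ⊤ P c) = ρ X + c) :
    LipschitzWith 1 ρ := by
  refine LipschitzWith.of_le_add fun X Y => ?_
  have hXY : X ≤ Y + Lp.const ⊤ P ‖X - Y‖ := by
    simpa using add_le_add_right (Lp.le_const_norm (X - Y)) Y
  rw [dist_eq_norm, ← hcash]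
  exact hmono hXY

end RiskMeasure

section InfConvolution

variable {A Ω : Type*} [MeasurableSpace A] [MeasurableSpace Ω] {μ : Measure A}
  {P : Measure Ω} {ρ : A → Lp ℝ ⊤ P → ℝ}

def HasLebesgueProperty (ρ₀ : Lp ℝ ⊤ P → ℝ) : Prop :=
  ∀ (Xn : ℕ → Lp ℝ ⊤ P) (X : Lp ℝ ⊤ P), (∃ C : ℝ, ∀ n, ‖Xn n‖ ≤ C) →
    (∀ ε : ℝ, 0 < ε → Tendsto (fun n => P {ω | ε ≤ |Xn n ω - X ω|}) atTop (𝓝 0)) →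
    Tendsto (fun n => ρ₀ (Xn n)) atTop (𝓝 (ρ₀ X))

def IsMeasurableFamily (μ : Measure A) (ρ : A → Lp ℝ ⊤ P → ℝ) : Prop :=
  ∀ Xa : A → Lp ℝ ⊤ P, (∀ Y : Lp ℝ 1 P, AEMeasurable (fun a => ∫ ω, Xa a ω * Y ω ∂P) μ) →
    AEMeasurable (fun a => ρ a (Xa a)) μ

theorem Feasible.add_smul [IsFiniteMeasure μ] [IsProbabilityMeasure P] (hμ : μ Set.univ ≠ 0)
    {Z : Lp ℝ ⊤ P} {Za : A → Lp ℝ ⊤ P} (hF : Feasible μ P Z Za) (W : Lp ℝ ⊤ P) :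
    Feasible μ P (Z + W) (fun a => Za a + (μ.real Set.univ)⁻¹ • W) := by
  have hμ' : μ.real Set.univ ≠ 0 := (measureReal_ne_zero_iff (measure_ne_top μ _)).2 hμ
  simp only [Feasible, Lp.integral_add_smul_mul]
  refine ⟨fun Y => (hF.1 Y).add (integrable_const _), fun Y => ?_⟩
  have hZW := Lp.integral_add_smul_mul Z W 1 Y
  rw [one_smul, one_mul] at hZW
  rw [integral_add (hF.1 Y) (integrable_const _), hF.2 Y, integral_const, smul_eq_mul,
    mul_inv_cancel_left₀ hμ', hZW]

theorem integrable_risk_add_smul [IsFiniteMeasure μ] (hlip : ∀ a, LipschitzWith 1 (ρ a))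
    (hmeas : IsMeasurableFamily μ ρ) {Za : A → Lp ℝ ⊤ P}
    (hF : ∀ Y : Lp ℝ 1 P, Integrable (fun a => ∫ ω, Za a ω * Y ω ∂P) μ)
    (hInt : Integrable (fun a => ρ a (Za a)) μ) (c : ℝ) (W : Lp ℝ ⊤ P) :
    Integrable (fun a => ρ a (Za a + c • W)) μ := by
  have hm : AEMeasurable (fun a => ρ a (Za a + c • W)) μ := by
    refine hmeas _ fun Y => ?_
    simp only [Lp.integral_add_smul_mul]
    exact (hF Y).aemeasurable.add aemeasurable_const
  refine Integrable.mono' (hInt.abs.add (integrable_const ‖c • W‖)) hm.aestronglyMeasurable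
    (Eventually.of_forall fun a => ?_)
  have := (hlip a).abs_sub_add_le (Za a) (c • W)
  rw [Pi.add_apply, Real.norm_eq_abs]
  linarith [abs_sub_abs_le_abs_sub (ρ a (Za a + c • W)) (ρ a (Za a))]

theorem sInf_valueSet_add_le [IsFiniteMeasure μ] [IsProbabilityMeasure P] (hμ : μ Set.univ ≠ 0)
    (hlip : ∀ a, LipschitzWith 1 (ρ a)) (hmeas : IsMeasurableFamily μ ρ)
    {X W : Lp ℝ ⊤ P} (hbdd : BddBelow (ValueSet μ P ρ (X + W))) {Xa : A → Lp ℝ ⊤ P}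
    (hF : Feasible μ P X Xa) (hInt : Integrable (fun a => ρ a (Xa a)) μ) :
    sInf (ValueSet μ P ρ (X + W)) ≤ ∫ a, ρ a (Xa a + (μ.real Set.univ)⁻¹ • W) ∂μ :=
  csInf_le hbdd ⟨_, hF.add_smul hμ W, integrable_risk_add_smul hlip hmeas hF.1 hInt _ W, rfl⟩

theorem sInf_valueSet_mono [IsFiniteMeasure μ] [IsProbabilityMeasure P] (hμ : μ Set.univ ≠ 0)
    (hmono : ∀ a, Monotone (ρ a)) (hlip : ∀ a, LipschitzWith 1 (ρ a))
    (hmeas : IsMeasurableFamily μ ρ) {V Z : Lp ℝ ⊤ P} (hV : BddBelow (ValueSet μ P ρ V))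
    (hZ : (ValueSet μ P ρ Z).Nonempty) (hVZ : V ≤ Z) :
    sInf (ValueSet μ P ρ V) ≤ sInf (ValueSet μ P ρ Z) := by
  refine le_csInf hZ ?_
  rintro _ ⟨Za, hF, hInt, rfl⟩
  have hshift : ∀ a, Za a + (μ.real Set.univ)⁻¹ • (V - Z) ≤ Za a := fun a =>
    add_le_of_nonpos_right (Lp.smul_nonpos (inv_nonneg.2 measureReal_nonneg) (sub_nonpos.2 hVZ))
  calc sInf (ValueSet μ P ρ V) = sInf (ValueSet μ P ρ (Z + (V - Z))) := by
        rw [add_sub_cancel]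
    _ ≤ ∫ a, ρ a (Za a + (μ.real Set.univ)⁻¹ • (V - Z)) ∂μ :=
        sInf_valueSet_add_le hμ hlip hmeas (by rwa [add_sub_cancel]) hF hInt
    _ ≤ ∫ a, ρ a (Za a) ∂μ :=
        integral_mono (integrable_risk_add_smul hlip hmeas hF.1 hInt _ _) hInt
          fun a => hmono a (hshift a)

theorem tendsto_integral_risk_add_smul_sub [IsFiniteMeasure μ] [IsFiniteMeasure P]
    (hleb : ∀ a, HasLebesgueProperty (ρ a)) (hlip : ∀ a, LipschitzWith 1 (ρ a))
    (hmeas : IsMeasurableFamily μ ρ) {Xa : A → Lp ℝ ⊤ P}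
    (hF : ∀ Y : Lp ℝ 1 P, Integrable (fun a => ∫ ω, Xa a ω * Y ω ∂P) μ)
    (hInt : Integrable (fun a => ρ a (Xa a)) μ) (c : ℝ) {Xn : ℕ → Lp ℝ ⊤ P} {X : Lp ℝ ⊤ P}
    {C : ℝ} (hC : ∀ n, ‖Xn n - X‖ ≤ C)
    (hlim : ∀ᵐ ω ∂P, Tendsto (fun n => Xn n ω) atTop (𝓝 (X ω))) :
    Tendsto (fun n => ∫ a, ρ a (Xa a + c • (Xn n - X)) ∂μ) atTop (𝓝 (∫ a, ρ a (Xa a) ∂μ)) := by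
  have hshift : ∀ n, ‖c • (Xn n - X)‖ ≤ |c| * C := fun n => by
    rw [norm_smul, Real.norm_eq_abs]
    exact mul_le_mul_of_nonneg_left (hC n) (abs_nonneg c)
  refine tendsto_integral_of_dominated_convergence (fun a => |ρ a (Xa a)| + |c| * C)
    (fun n => (integrable_risk_add_smul hlip hmeas hF hInt c _).aestronglyMeasurable)
    (hInt.abs.add (integrable_const _)) (fun n => Eventually.of_forall fun a => ?_)
    (Eventually.of_forall fun a => ?_)
  · have := (hlip a).abs_sub_add_le (Xa a) (c • (Xn n - X))
    rw [Real.norm_eq_abs]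
    linarith [abs_sub_abs_le_abs_sub (ρ a (Xa a + c • (Xn n - X))) (ρ a (Xa a)), hshift n]
  · refine hleb a _ _ ⟨‖Xa a‖ + |c| * C, fun n => (norm_add_le _ _).trans ?_⟩
      fun ε hε => Lp.tendsto_measure_le_abs_sub_of_ae (Lp.ae_tendsto_add_smul_sub hlim _ c) hε
    linarith [hshift n]

end InfConvolution

theorem integral_infConvolution_continuous_from_above_general
    {A Ω : Type*} [MeasurableSpace A] [MeasurableSpace Ω]
    (μ : Measure A) [IsFiniteMeasure μ] (hμ : μ Set.univ ≠ 0)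
    (P : Measure Ω) [IsProbabilityMeasure P]
    (ρ : A → Lp ℝ ⊤ P → ℝ)
    (hmono : ∀ a, ∀ X Y : Lp ℝ ⊤ P, Y ≤ X → ρ a Y ≤ ρ a X)
    (hcash : ∀ a, ∀ (X : Lp ℝ ⊤ P) (c : ℝ), ρ a (X + Lp.const ⊤ P c) = ρ a X + c)
    -- Lebesgue property of each ρ_a
    (hleb : ∀ a, ∀ (Xn : ℕ → Lp ℝ ⊤ P) (X : Lp ℝ ⊤ P), (∃ C : ℝ, ∀ n, ‖Xn n‖ ≤ C) →
      (∀ ε : ℝ, 0 < ε →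
        Filter.Tendsto (fun n => P {ω | ε ≤ |Xn n ω - X ω|}) Filter.atTop (nhds 0)) →
      Filter.Tendsto (fun n => ρ a (Xn n)) Filter.atTop (nhds (ρ a X)))
    -- measurable family of risk measures
    (hmeas : ∀ Xa : A → Lp ℝ ⊤ P,
      (∀ Y : Lp ℝ 1 P, AEMeasurable (fun a => ∫ ω, Xa a ω * Y ω ∂P) μ) →
      AEMeasurable (fun a => ρ a (Xa a)) μ)
    -- the integral infimal convolution is finite-valued
    (hfin : ∀ X : Lp ℝ ⊤ P, (ValueSet μ P ρ X).Nonempty ∧ BddBelow (ValueSet μ P ρ X))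
    (Xn : ℕ → Lp ℝ ⊤ P) (X : Lp ℝ ⊤ P)
    (hdec : Antitone Xn)
    (hconv' : ∀ᵐ ω ∂P, Filter.Tendsto (fun n => Xn n ω) Filter.atTop (nhds (X ω))) :
    (⨅ n, sInf (ValueSet μ P ρ (Xn n))) = sInf (ValueSet μ P ρ X) := by
  have hmono' : ∀ a, Monotone (ρ a) := fun a X Y h => hmono a Y X h
  have hlip : ∀ a, LipschitzWith 1 (ρ a) := fun a =>
    lipschitzWith_one_of_monotone_of_cash (hmono' a) (hcash a)
  have hXle : ∀ n, X ≤ Xn n := hdec.le_of_tendsto_ae hconv'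
  have hφle : ∀ n, sInf (ValueSet μ P ρ X) ≤ sInf (ValueSet μ P ρ (Xn n)) := fun n =>
    sInf_valueSet_mono hμ hmono' hlip hmeas (hfin X).2 (hfin _).1 (hXle n)
  have hbound : ∀ n, ‖Xn n - X‖ ≤ ‖Xn 0 - X‖ := fun n =>
    Lp.norm_le_norm_of_nonneg_of_le (sub_nonneg.2 (hXle n))
      (sub_le_sub_right (hdec (Nat.zero_le n)) X)
  refine le_antisymm (le_csInf (hfin X).1 ?_) (le_ciInf hφle)
  rintro _ ⟨Xa, hF, hInt, rfl⟩
  refine ge_of_tendsto (tendsto_integral_risk_add_smul_sub hleb hlip hmeas hF.1 hInt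
    (μ.real Set.univ)⁻¹ hbound hconv') (Eventually.of_forall fun n => ?_)
  calc ⨅ n, sInf (ValueSet μ P ρ (Xn n)) ≤ sInf (ValueSet μ P ρ (X + (Xn n - X))) := by
        rw [add_sub_cancel]
        exact ciInf_le ⟨_, Set.forall_mem_range.2 hφle⟩ n
    _ ≤ _ := sInf_valueSet_add_le hμ hlip hmeas (hfin _).2 hF hInt

/-- If each `ρ_a` has the Lebesgue property and the integral infimal
convolution `φ` is finite-valued, then `φ` is continuous from above: for any decreasing
sequence `(X^n) ⊆ L∞(P)` converging a.s. to `X`, `inf_n φ(X^n) = φ(X)`. -/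
theorem integral_infConvolution_continuous_from_above
    {A Ω : Type*} [MeasurableSpace A] [MeasurableSpace Ω]
    (μ : Measure A) [IsFiniteMeasure μ] (hμ : μ Set.univ ≠ 0)
    (P : Measure Ω) [IsProbabilityMeasure P]
    (ρ : A → Lp ℝ ⊤ P → ℝ)
    (hmono : ∀ a, ∀ X Y : Lp ℝ ⊤ P, Y ≤ X → ρ a Y ≤ ρ a X)
    (hcash : ∀ a, ∀ (X : Lp ℝ ⊤ P) (c : ℝ), ρ a (X + Lp.const ⊤ P c) = ρ a X + c)
    (hconv : ∀ a, ∀ (X Y : Lp ℝ ⊤ P) (l : ℝ), 0 ≤ l → l ≤ 1 →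
      ρ a (l • X + (1 - l) • Y) ≤ l * ρ a X + (1 - l) * ρ a Y)
    -- Lebesgue property of each ρ_a
    (hleb : ∀ a, ∀ (Xn : ℕ → Lp ℝ ⊤ P) (X : Lp ℝ ⊤ P), (∃ C : ℝ, ∀ n, ‖Xn n‖ ≤ C) →
      (∀ ε : ℝ, 0 < ε →
        Filter.Tendsto (fun n => P {ω | ε ≤ |Xn n ω - X ω|}) Filter.atTop (nhds 0)) →
      Filter.Tendsto (fun n => ρ a (Xn n)) Filter.atTop (nhds (ρ a X)))
    -- measurable family of risk measures
    (hmeas : ∀ Xa : A → Lp ℝ ⊤ P,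
      (∀ Y : Lp ℝ 1 P, AEMeasurable (fun a => ∫ ω, Xa a ω * Y ω ∂P) μ) →
      AEMeasurable (fun a => ρ a (Xa a)) μ)
    -- the integral infimal convolution is finite-valued
    (hfin : ∀ X : Lp ℝ ⊤ P, (ValueSet μ P ρ X).Nonempty ∧ BddBelow (ValueSet μ P ρ X))
    (Xn : ℕ → Lp ℝ ⊤ P) (X : Lp ℝ ⊤ P)
    (hdec : Antitone Xn)
    (hconv' : ∀ᵐ ω ∂P, Filter.Tendsto (fun n => Xn n ω) Filter.atTop (nhds (X ω))) :
    (⨅ n, sInf (ValueSet μ P ρ (Xn n))) = sInf (ValueSet μ P ρ X) :=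
  integral_infConvolution_continuous_from_above_general μ hμ P ρ hmono hcash hleb hmeas hfin Xn X
    hdec hconv'
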